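/- arXiv:2007.09216 — 2 statements merged into one kernel-verified Lean document; each statement's English description precedes it below -/
import Mathlib

section
/- Let (e_j)_{j∈J} be a Parseval frame in a complex Hilbert space K with analysis operator θ. Let C be a bounded positive operator on K with bounded inverse such that C ≤ I (i.e., ⟨C f, f⟩ ≤ ‖f‖² for all f) and such that the Hilbert-space dimension of the closure of the range of I − C² is at most the Hilbert-space dimension of the orthogonal complement of the range of θ in ℓ²(J). Then there exists a Parseval frame (e^o_j)_{j∈J} in K such that (C⁻¹ e^o_j)_{j∈J} is a dual frame of (e_j): it is a frame and f = ∑_{j∈J} ⟨f, e_j⟩ (C⁻¹ e^o_j) for all f ∈ K. -/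
/-!
Since `0 ≤ C ≤ 1`, the defect operator `D = (1 - C²)^{1/2}` satisfies
`‖C f‖² + ‖D f‖² = ‖f‖²`, and its range lies in the closure of the range of `1 - C²`, which
embeds isometrically into `Θᗮ`. Adding this orthogonal correction to `θ ∘ C` gives an isometry
`ψ : K → ℓ²(J)` with `ψ* θ = C`. The vectors `eᵒ_j = ψ* δ_j` then form a Parseval frame, and
`f = C⁻¹ ψ* θ f = ∑ ⟨f, e_j⟩ C⁻¹ eᵒ_j`.

The paper's `⟨f, e_j⟩` is `⟪e j, f⟫_𝕜` here: Mathlib's inner product is conjugate-linear in the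
first argument.
-/

open scoped InnerProductSpace InnerProduct lp
open ContinuousLinearMap RCLike

section Operators

variable {𝕜 E F G : Type*} [RCLike 𝕜]
  [NormedAddCommGroup E] [InnerProductSpace 𝕜 E] [CompleteSpace E]
  [NormedAddCommGroup F] [InnerProductSpace 𝕜 F] [CompleteSpace F]
  [NormedAddCommGroup G] [InnerProductSpace 𝕜 G] [CompleteSpace G]

lemma ContinuousLinearMap.range_adjoint_le_closure_range_adjoint_comp_self (T : E →L[𝕜] F) :
    LinearMap.range (T† : F →ₗ[𝕜] E) ≤
      (LinearMap.range ((T† ∘L T : E →L[𝕜] E) : E →ₗ[𝕜] E)).topologicalClosure := by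
  have h := (T† ∘L T).orthogonal_ker
  rw [ker_adjoint_comp_self, T.orthogonal_ker] at h
  simp only [adjoint_comp, adjoint_adjoint] at h
  exact h ▸ Submodule.le_topologicalClosure _

lemma ContinuousLinearMap.norm_sq_add_norm_sq_of_adjoint_comp_add {A : E →L[𝕜] F} {B : E →L[𝕜] G}
    (h : A† ∘L A + B† ∘L B = 1) (f : E) : ‖A f‖ ^ 2 + ‖B f‖ ^ 2 = ‖f‖ ^ 2 := by
  rw [apply_norm_sq_eq_inner_adjoint_left, apply_norm_sq_eq_inner_adjoint_left, ← map_add,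
    ← inner_add_left, ← add_apply, h, one_apply_eq_self, inner_self_eq_norm_sq]

lemma LinearIsometry.exists_adjoint_comp_eq_adjoint (θ : E →ₗᵢ[𝕜] F) (C : E →L[𝕜] E)
    (W : E →L[𝕜] F) (horth : ∀ f g, ⟪θ f, W g⟫_𝕜 = 0)
    (hnorm : ∀ f, ‖C f‖ ^ 2 + ‖W f‖ ^ 2 = ‖f‖ ^ 2) :
    ∃ ψ : E →ₗᵢ[𝕜] F, ψ.toContinuousLinearMap† ∘L θ.toContinuousLinearMap = C† := by
  let ψ₀ : E →L[𝕜] F := θ.toContinuousLinearMap ∘L C + W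
  have hψ₀ (f : E) : ‖ψ₀ f‖ = ‖f‖ := by
    refine (pow_left_inj₀ (norm_nonneg _) (norm_nonneg f) two_ne_zero).mp ?_
    calc ‖ψ₀ f‖ ^ 2 = ‖θ (C f)‖ ^ 2 + ‖W f‖ ^ 2 := by
          simp [ψ₀, norm_add_sq (𝕜 := 𝕜), horth]
      _ = ‖f‖ ^ 2 := by rw [θ.norm_map, hnorm]
  refine ⟨⟨ψ₀.toLinearMap, hψ₀⟩, ?_⟩
  ext f
  refine ext_inner_right 𝕜 fun g => ?_
  simp [adjoint_inner_left, ψ₀, inner_add_right, horth]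

end Operators

section ComplexOperators

variable {K : Type*} [NormedAddCommGroup K] [InnerProductSpace ℂ K] [CompleteSpace K]

lemma ContinuousLinearMap.norm_le_one_of_re_inner_le {C : K →L[ℂ] K} (hC : C.IsPositive)
    (h : ∀ f, re ⟪f, C f⟫_ℂ ≤ ‖f‖ ^ 2) : ‖C‖ ≤ 1 := by
  refine (CStarAlgebra.norm_le_one_iff_of_nonneg C ((nonneg_iff_isPositive C).mpr hC)).mpr ?_
  refine (le_def C 1).mpr ⟨(IsSelfAdjoint.one _).sub hC.isSelfAdjoint |>.isSymmetric, fun f => ?_⟩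
  rw [reApplyInnerSelf_apply, sub_apply, one_apply_eq_self, inner_sub_left, map_sub,
    inner_self_eq_norm_sq]
  linarith [h f, inner_re_symm (𝕜 := ℂ) f (C f)]

lemma ContinuousLinearMap.exists_defect_operator {C : K →L[ℂ] K} (hC : ‖C‖ ≤ 1) :
    ∃ D : K →L[ℂ] K,
      (∀ f, D f ∈ (LinearMap.range ((1 - C† ∘L C : K →L[ℂ] K) : K →ₗ[ℂ] K)).topologicalClosure) ∧
      ∀ f, ‖C f‖ ^ 2 + ‖D f‖ ^ 2 = ‖f‖ ^ 2 := by
  have hCC : C† ∘L C ≤ 1 := by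
    refine (CStarAlgebra.norm_le_one_iff_of_nonneg _ (star_mul_self_nonneg C)).mp ?_
    rw [CStarRing.norm_star_mul_self]
    exact mul_le_one₀ hC (norm_nonneg C) hC
  set D := CFC.sqrt (1 - C† ∘L C)
  have hD : D† = D := (IsSelfAdjoint.of_nonneg (CFC.sqrt_nonneg _)).adjoint_eq
  have hDD : D† ∘L D = 1 - C† ∘L C := by
    rw [hD]
    exact CFC.sqrt_mul_sqrt_self _ (sub_nonneg.mpr hCC)
  refine ⟨D, fun f => ?_, norm_sq_add_norm_sq_of_adjoint_comp_add (by rw [hDD]; abel)⟩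
  rw [← hDD]
  simpa only [hD, coe_coe] using
    D.range_adjoint_le_closure_range_adjoint_comp_self (LinearMap.mem_range_self _ f)

end ComplexOperators

section Frames

variable (𝕜 : Type*) {E F J : Type*} [RCLike 𝕜]
  [NormedAddCommGroup E] [InnerProductSpace 𝕜 E] [NormedAddCommGroup F] [InnerProductSpace 𝕜 F]

def IsParsevalFrame (e : J → E) : Prop :=
  ∀ f : E, HasSum (fun j => ‖⟪e j, f⟫_𝕜‖ ^ 2) (‖f‖ ^ 2)

def IsFrame (e : J → E) : Prop :=
  ∃ A B : ℝ, 0 < A ∧ A ≤ B ∧ ∀ f : E, ∃ s : ℝ,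
    HasSum (fun j => ‖⟪e j, f⟫_𝕜‖ ^ 2) s ∧ A * ‖f‖ ^ 2 ≤ s ∧ s ≤ B * ‖f‖ ^ 2

variable {𝕜}

lemma lp.hasSum_norm_sq (x : ℓ²(J, 𝕜)) : HasSum (fun j => ‖x j‖ ^ 2) (‖x‖ ^ 2) := by
  simpa using lp.hasSum_norm (p := 2) (by norm_num) x

namespace IsParsevalFrame

variable {e : J → E} (he : IsParsevalFrame 𝕜 e)
include he

lemma memℓp (f : E) : Memℓp (fun j => ⟪e j, f⟫_𝕜) 2 :=
  memℓp_gen (by simpa using (he f).summable)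

def analysis : E →ₗᵢ[𝕜] ℓ²(J, 𝕜) where
  toFun f := ⟨fun j => ⟪e j, f⟫_𝕜, he.memℓp f⟩
  map_add' f g := by ext j; exact inner_add_right _ _ _
  map_smul' c f := by ext j; exact inner_smul_right _ _ _
  norm_map' f := by
    refine (pow_left_inj₀ (norm_nonneg _) (norm_nonneg f) two_ne_zero).mp ?_
    exact (lp.hasSum_norm_sq _).unique (he f)

@[simp]
lemma analysis_apply (f : E) (j : J) : he.analysis f j = ⟪e j, f⟫_𝕜 := rfl

lemma isFrame_map [CompleteSpace E] [CompleteSpace F] {T : E →L[𝕜] F} {R : F →L[𝕜] E}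
    (hTR : T ∘L R = 1) : IsFrame 𝕜 fun j => T (e j) := by
  have hsum (f : F) : HasSum (fun j => ‖⟪T (e j), f⟫_𝕜‖ ^ 2) (‖(T†) f‖ ^ 2) := by
    simpa only [adjoint_inner_right] using he ((T†) f)
  have hlower (f : F) : ‖f‖ ≤ (‖R‖ + 1) * ‖(T†) f‖ :=
    calc ‖f‖ = ‖(R†) ((T†) f)‖ := by
          rw [← comp_apply, ← adjoint_comp, hTR, adjoint_one, one_apply_eq_self]
      _ ≤ ‖R†‖ * ‖(T†) f‖ := le_opNorm _ _
      _ ≤ (‖R‖ + 1) * ‖(T†) f‖ := by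
          rw [LinearIsometryEquiv.norm_map]
          nlinarith [norm_nonneg ((T†) f)]
  have hupper (f : F) : ‖(T†) f‖ ≤ (‖T‖ + 1) * ‖f‖ :=
    calc ‖(T†) f‖ ≤ ‖T†‖ * ‖f‖ := le_opNorm _ _
      _ ≤ (‖T‖ + 1) * ‖f‖ := by
          rw [LinearIsometryEquiv.norm_map]
          nlinarith [norm_nonneg f]
  refine ⟨((‖R‖ + 1) ^ 2)⁻¹, (‖T‖ + 1) ^ 2, by positivity, ?_, fun f => ⟨_, hsum f, ?_, ?_⟩⟩
  · have : 1 ≤ (‖T‖ + 1) ^ 2 := one_le_pow₀ (by linarith [norm_nonneg T])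
    exact (inv_le_one_of_one_le₀ (one_le_pow₀ (by linarith [norm_nonneg R]))).trans this
  · rw [inv_mul_le_iff₀ (by positivity), ← mul_pow]
    exact pow_le_pow_left₀ (norm_nonneg f) (hlower f) 2
  · rw [← mul_pow]
    exact pow_le_pow_left₀ (norm_nonneg _) (hupper f) 2

end IsParsevalFrame

lemma ContinuousLinearMap.inner_adjoint_single_left [CompleteSpace E] [DecidableEq J]
    (T : E →L[𝕜] ℓ²(J, 𝕜)) (j : J) (f : E) : ⟪(T†) (lp.single 2 j 1), f⟫_𝕜 = T f j := by
  simp [adjoint_inner_left, lp.inner_single_left]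

lemma LinearIsometry.isParsevalFrame_adjoint_single [CompleteSpace E] [DecidableEq J]
    (ψ : E →ₗᵢ[𝕜] ℓ²(J, 𝕜)) :
    IsParsevalFrame 𝕜 fun j => (ψ.toContinuousLinearMap†) (lp.single 2 j 1) := by
  intro f
  simpa [inner_adjoint_single_left] using lp.hasSum_norm_sq (ψ f)

lemma ContinuousLinearMap.hasSum_smul_apply_single [DecidableEq J] (T : ℓ²(J, 𝕜) →L[𝕜] E)
    (x : ℓ²(J, 𝕜)) : HasSum (fun j => x j • T (lp.single 2 j 1)) (T x) := by
  convert T.hasSum (lp.hasSum_single ENNReal.ofNat_ne_top x) using 2 with j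
  rw [← map_smul, ← lp.single_smul, smul_eq_mul, mul_one]

end Frames

theorem statement6_general
    {K : Type*} [NormedAddCommGroup K] [InnerProductSpace ℂ K] [CompleteSpace K]
    {J : Type*}
    (e : J → K) (hPar : ∀ f : K, HasSum (fun j => ‖⟪e j, f⟫_ℂ‖ ^ 2) (‖f‖ ^ 2))
    (Θ : Submodule ℂ (lp (fun _ : J => ℂ) 2))
    (hΘ : ∀ x : lp (fun _ : J => ℂ) 2, x ∈ Θ ↔ ∃ f : K, ∀ j, x j = ⟪e j, f⟫_ℂ)
    (C Cinv : K →L[ℂ] K) (hC : C.IsPositive)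
    (hCinv₂ : Cinv ∘L C = 1)
    (hCle : ∀ f : K, (⟪f, C f⟫_ℂ).re ≤ ‖f‖ ^ 2)
    (hdim : Nonempty
      ((LinearMap.range ((1 - C ∘L C : K →L[ℂ] K) : K →ₗ[ℂ] K)).topologicalClosure →ₗᵢ[ℂ] Θᗮ)) :
    ∃ eo : J → K,
      (∀ f : K, HasSum (fun j => ‖⟪eo j, f⟫_ℂ‖ ^ 2) (‖f‖ ^ 2)) ∧
      (∃ A B : ℝ, 0 < A ∧ A ≤ B ∧ ∀ f : K, ∃ s : ℝ,
        HasSum (fun j => ‖⟪Cinv (eo j), f⟫_ℂ‖ ^ 2) s ∧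
        A * ‖f‖ ^ 2 ≤ s ∧ s ≤ B * ‖f‖ ^ 2) ∧
      ∀ f : K, HasSum (fun j => ⟪e j, f⟫_ℂ • Cinv (eo j)) f := by
  classical
  obtain ⟨V⟩ := hdim
  have hCadj : C† = C := hC.isSelfAdjoint.adjoint_eq
  obtain ⟨D, hDR, hDnorm⟩ := exists_defect_operator (norm_le_one_of_re_inner_le hC hCle)
  rw [hCadj] at hDR
  have he : IsParsevalFrame ℂ e := hPar
  let θ := he.analysis
  let W : K →L[ℂ] ℓ²(J, ℂ) := Θᗮ.subtypeL ∘L V.toContinuousLinearMap ∘L D.codRestrict _ hDR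
  have horth (f g : K) : ⟪θ f, W g⟫_ℂ = 0 :=
    Submodule.inner_right_of_mem_orthogonal ((hΘ _).mpr ⟨f, fun _ => rfl⟩) (V _).2
  have hWnorm (f : K) : ‖C f‖ ^ 2 + ‖W f‖ ^ 2 = ‖f‖ ^ 2 := by
    rw [show ‖W f‖ = ‖D f‖ from V.norm_map _]
    exact hDnorm f
  obtain ⟨ψ, hψ⟩ := θ.exists_adjoint_comp_eq_adjoint C W horth hWnorm
  have heo := ψ.isParsevalFrame_adjoint_single
  refine ⟨_, heo, heo.isFrame_map hCinv₂, fun f => ?_⟩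
  have hrec : (Cinv ∘L ψ.toContinuousLinearMap†) (θ f) = f := by
    have h := DFunLike.congr_fun hψ f
    rw [comp_apply, LinearIsometry.coe_toContinuousLinearMap, hCadj] at h
    rw [comp_apply, h, ← comp_apply, hCinv₂, one_apply_eq_self]
  simpa [hrec, θ] using (Cinv ∘L ψ.toContinuousLinearMap†).hasSum_smul_apply_single (θ f)

/-- Let `(e j)` be a Parseval frame in `K` whose analysis operator has range `Θ`
in `ℓ²(J)`. Let `C` be a bounded positive operator with bounded inverse `Cinv`, with `C ≤ I`
(i.e. `⟨C f, f⟩ ≤ ‖f‖²` for all `f`), and such that the Hilbert-space dimension of the closure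
of the range of `I − C²` is at most that of `Θᗮ` (expressed by a linear isometric embedding).
Then there exists a Parseval frame `(e^o j)` in `K` such that `(Cinv (e^o j))` is a dual frame
of `(e j)`: it is a frame and `f = ∑ j, ⟨f, e_j⟩ (C⁻¹ e^o_j)` for all `f`.
(The paper's inner product `(f, g)`, linear in the first argument, is `⟪g, f⟫_ℂ`.) -/
theorem statement6
    {K : Type*} [NormedAddCommGroup K] [InnerProductSpace ℂ K] [CompleteSpace K]
    {J : Type*} [Countable J]
    (e : J → K) (hPar : ∀ f : K, HasSum (fun j => ‖⟪e j, f⟫_ℂ‖ ^ 2) (‖f‖ ^ 2))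
    (Θ : Submodule ℂ (lp (fun _ : J => ℂ) 2))
    (hΘ : ∀ x : lp (fun _ : J => ℂ) 2, x ∈ Θ ↔ ∃ f : K, ∀ j, x j = ⟪e j, f⟫_ℂ)
    (C Cinv : K →L[ℂ] K) (hC : C.IsPositive)
    (hCinv₁ : C ∘L Cinv = 1) (hCinv₂ : Cinv ∘L C = 1)
    (hCle : ∀ f : K, (⟪f, C f⟫_ℂ).re ≤ ‖f‖ ^ 2)
    (hdim : Nonempty
      ((LinearMap.range ((1 - C ∘L C : K →L[ℂ] K) : K →ₗ[ℂ] K)).topologicalClosure →ₗᵢ[ℂ] Θᗮ)) :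
    ∃ eo : J → K,
      (∀ f : K, HasSum (fun j => ‖⟪eo j, f⟫_ℂ‖ ^ 2) (‖f‖ ^ 2)) ∧
      (∃ A B : ℝ, 0 < A ∧ A ≤ B ∧ ∀ f : K, ∃ s : ℝ,
        HasSum (fun j => ‖⟪Cinv (eo j), f⟫_ℂ‖ ^ 2) s ∧
        A * ‖f‖ ^ 2 ≤ s ∧ s ≤ B * ‖f‖ ^ 2) ∧
      ∀ f : K, HasSum (fun j => ⟪e j, f⟫_ℂ • Cinv (eo j)) f :=
  statement6_general e hPar Θ hΘ C Cinv hC hCinv₂ hCle hdim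
end

section
/- Let (e_j)_{j∈J} be a Parseval frame in a complex Hilbert space K with J = J₀ ⊔ J₁ where J₁ is finite, let (b_j)_{j∈J₀} be an orthonormal basis of K and T a bounded positive operator on K with bounded inverse such that e_j = T b_j for all j ∈ J₀. Then: (i) for every g ∈ K, ∑_{j∈J₁} ⟨g, e_j⟩ e_j = g − T² g, i.e., the frame operator of the finite family (e_j)_{j∈J₁} is I − T²; and (ii) the linear span M₁ of {e_j : j ∈ J₁} equals the range of I − T², and the orthogonal complement of M₁ in K equals the kernel of I − T². -/
/-!
For `j ∈ J₀` we have `⟪e j, g⟫ = ⟪b j, T g⟫`, so Parseval's identity for the basis `b` shows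
that the `J₀`-part of the frame contributes exactly `‖T g‖²` to `‖g‖²`. Hence the quadratic forms
of the frame operator `S` of `(e j)_{j ∈ J₁}` and of `1 - T²` agree, and both operators being
symmetric, `S = 1 - T²`. As `S` is positive, `S g = 0` forces `⟪e j, g⟫ = 0` for `j ∈ J₁`, so
`ker S = M₁ᗮ`; and `range S ⊆ M₁` with `(range S)ᗮ = ker S = M₁ᗮ`, so `range S = M₁` because
both are finite-dimensional.
-/

open scoped InnerProductSpace
open InnerProductSpace

namespace HilbertBasis

variable {ι 𝕜 E : Type*} [RCLike 𝕜] [NormedAddCommGroup E] [InnerProductSpace 𝕜 E]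

theorem hasSum_sq_norm_inner (b : HilbertBasis ι 𝕜 E) (x : E) :
    HasSum (fun i => ‖⟪b i, x⟫_𝕜‖ ^ 2) (‖x‖ ^ 2) := by
  rw [← RCLike.hasSum_ofReal 𝕜]
  convert b.hasSum_inner_mul_inner x x using 1
  · ext i
    rw [← inner_conj_symm x (b i), RCLike.conj_mul]
    push_cast
    rfl
  · push_cast
    exact (inner_self_eq_norm_sq_to_K x).symm

end HilbertBasis

namespace Submodule

variable {ι 𝕜 E : Type*} [RCLike 𝕜] [NormedAddCommGroup E] [InnerProductSpace 𝕜 E]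

theorem mem_orthogonal_span_range_iff {v : ι → E} {x : E} :
    x ∈ (span 𝕜 (Set.range v))ᗮ ↔ ∀ i, ⟪v i, x⟫_𝕜 = 0 := by
  rw [← span_singleton_le_iff_mem, ← isOrtho_iff_le, isOrtho_comm, isOrtho_span]
  simp

end Submodule

section FiniteFrameOperator

variable {ι 𝕜 E : Type*} [Fintype ι] [RCLike 𝕜] [NormedAddCommGroup E] [InnerProductSpace 𝕜 E]

variable (𝕜) in
noncomputable def finiteFrameOperator (v : ι → E) : E →L[𝕜] E :=
  ∑ i, rankOne 𝕜 (v i) (v i)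

theorem finiteFrameOperator_apply (v : ι → E) (x : E) :
    finiteFrameOperator 𝕜 v x = ∑ i, ⟪v i, x⟫_𝕜 • v i := by
  simp [finiteFrameOperator]

theorem isPositive_finiteFrameOperator (v : ι → E) : (finiteFrameOperator 𝕜 v).IsPositive :=
  ContinuousLinearMap.isPositive_sum _ fun i _ => isPositive_rankOne_self (v i)

theorem inner_finiteFrameOperator_apply_self (v : ι → E) (x : E) :
    ⟪finiteFrameOperator 𝕜 v x, x⟫_𝕜 = ((∑ i, ‖⟪v i, x⟫_𝕜‖ ^ 2 : ℝ) : 𝕜) := by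
  rw [finiteFrameOperator_apply, sum_inner]
  push_cast
  exact Finset.sum_congr rfl fun i _ => by rw [inner_smul_left, RCLike.conj_mul]

theorem ker_finiteFrameOperator (v : ι → E) :
    LinearMap.ker (finiteFrameOperator 𝕜 v : E →ₗ[𝕜] E) =
      (Submodule.span 𝕜 (Set.range v))ᗮ := by
  ext x
  rw [LinearMap.mem_ker, Submodule.mem_orthogonal_span_range_iff]
  refine ⟨fun hx i => ?_, fun hx => by simp [finiteFrameOperator_apply, hx]⟩
  have hsum : ∑ i, ‖⟪v i, x⟫_𝕜‖ ^ 2 = 0 := by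
    have := inner_finiteFrameOperator_apply_self (𝕜 := 𝕜) v x
    rw [ContinuousLinearMap.coe_coe] at hx
    rw [hx, inner_zero_left] at this
    exact_mod_cast this.symm
  have := (Finset.sum_eq_zero_iff_of_nonneg fun i _ => sq_nonneg ‖⟪v i, x⟫_𝕜‖).mp hsum i
    (Finset.mem_univ i)
  simpa using this

theorem range_finiteFrameOperator_le (v : ι → E) :
    LinearMap.range (finiteFrameOperator 𝕜 v : E →ₗ[𝕜] E) ≤ Submodule.span 𝕜 (Set.range v) := by
  rintro _ ⟨x, rfl⟩
  rw [ContinuousLinearMap.coe_coe, finiteFrameOperator_apply]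
  exact Submodule.sum_mem _ fun i _ => Submodule.smul_mem _ _ (Submodule.subset_span ⟨i, rfl⟩)

theorem range_finiteFrameOperator (v : ι → E) :
    LinearMap.range (finiteFrameOperator 𝕜 v : E →ₗ[𝕜] E) = Submodule.span 𝕜 (Set.range v) := by
  set S := (finiteFrameOperator 𝕜 v : E →ₗ[𝕜] E)
  have : FiniteDimensional 𝕜 (Submodule.span 𝕜 (Set.range v)) :=
    FiniteDimensional.span_of_finite 𝕜 (Set.finite_range v)
  have : FiniteDimensional 𝕜 (LinearMap.range S) :=
    Submodule.finiteDimensional_of_le (range_finiteFrameOperator_le v)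
  refine (range_finiteFrameOperator_le v).antisymm ?_
  calc Submodule.span 𝕜 (Set.range v) ≤ (Submodule.span 𝕜 (Set.range v))ᗮᗮ :=
        Submodule.le_orthogonal_orthogonal _
    _ = (LinearMap.range S)ᗮᗮ := by
        rw [← ker_finiteFrameOperator,
          (isPositive_finiteFrameOperator v).isSymmetric.orthogonal_range]
    _ = LinearMap.range S := Submodule.orthogonal_orthogonal _

end FiniteFrameOperator

section ParsevalFrame

variable {J₀ J₁ 𝕜 E : Type*} [Fintype J₁] [RCLike 𝕜] [NormedAddCommGroup E]
  [InnerProductSpace 𝕜 E] {e : J₀ ⊕ J₁ → E} {T : E →L[𝕜] E}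

theorem sum_sq_norm_inner_inr_eq (hPar : ∀ f, HasSum (fun j => ‖⟪e j, f⟫_𝕜‖ ^ 2) (‖f‖ ^ 2))
    (b : HilbertBasis J₀ 𝕜 E) (hT : T.IsSymmetric) (he : ∀ j, e (.inl j) = T (b j)) (x : E) :
    ∑ j, ‖⟪e (.inr j), x⟫_𝕜‖ ^ 2 = ‖x‖ ^ 2 - ‖T x‖ ^ 2 := by
  have hT' : ∀ x y, ⟪T x, y⟫_𝕜 = ⟪x, T y⟫_𝕜 := hT
  have hinl : HasSum (fun j => ‖⟪e (.inl j), x⟫_𝕜‖ ^ 2) (‖T x‖ ^ 2) := by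
    simpa only [he, hT'] using b.hasSum_sq_norm_inner (T x)
  have hsplit := HasSum.sum (f := fun j => ‖⟪e j, x⟫_𝕜‖ ^ 2) hinl
    (hasSum_fintype fun j => ‖⟪e (.inr j), x⟫_𝕜‖ ^ 2)
  rw [(hPar x).unique hsplit]
  ring

theorem finiteFrameOperator_inr_eq_one_sub
    (hPar : ∀ f, HasSum (fun j => ‖⟪e j, f⟫_𝕜‖ ^ 2) (‖f‖ ^ 2))
    (b : HilbertBasis J₀ 𝕜 E) (hT : T.IsSymmetric) (he : ∀ j, e (.inl j) = T (b j)) :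
    finiteFrameOperator 𝕜 (e ∘ Sum.inr) = 1 - T ∘L T := by
  set S := finiteFrameOperator 𝕜 (e ∘ Sum.inr)
  have hS : ∀ x y, ⟪S x, y⟫_𝕜 = ⟪x, S y⟫_𝕜 :=
    (isPositive_finiteFrameOperator (e ∘ Sum.inr)).isSymmetric
  have hT' : ∀ x y, ⟪T x, y⟫_𝕜 = ⟪x, T y⟫_𝕜 := hT
  have hsymm : ((S - (1 - T ∘L T) : E →L[𝕜] E) : E →ₗ[𝕜] E).IsSymmetric := fun x y => by
    simp [inner_sub_left, inner_sub_right, hS x y, hT' (T x) y, hT' x (T y)]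
  rw [← sub_eq_zero]
  apply ContinuousLinearMap.coe_injective
  rw [ContinuousLinearMap.toLinearMap_zero, ← hsymm.inner_map_self_eq_zero]
  intro x
  have hTT : ⟪T (T x), x⟫_𝕜 = ((‖T x‖ ^ 2 : ℝ) : 𝕜) := by
    rw [hT', inner_self_eq_norm_sq_to_K]
    push_cast
    rfl
  simp [S, hTT, inner_sub_left, inner_finiteFrameOperator_apply_self,
    sum_sq_norm_inner_inr_eq hPar b hT he x]

end ParsevalFrame

theorem statement13_general
    {K : Type*} [NormedAddCommGroup K] [InnerProductSpace ℂ K] [CompleteSpace K]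
    {J₀ J₁ : Type*} [Fintype J₁]
    (e : J₀ ⊕ J₁ → K)
    (hPar : ∀ f : K, HasSum (fun j => ‖⟪e j, f⟫_ℂ‖ ^ 2) (‖f‖ ^ 2))
    (b : HilbertBasis J₀ ℂ K)
    (T : K →L[ℂ] K) (hT : T.IsPositive)
    (he : ∀ j : J₀, e (Sum.inl j) = T (b j)) :
    (∀ g : K, ∑ j : J₁, ⟪e (Sum.inr j), g⟫_ℂ • e (Sum.inr j) = g - T (T g)) ∧
    Submodule.span ℂ (Set.range fun j : J₁ => e (Sum.inr j)) =
      LinearMap.range ((1 - T ∘L T : K →L[ℂ] K) : K →ₗ[ℂ] K) ∧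
    (Submodule.span ℂ (Set.range fun j : J₁ => e (Sum.inr j)))ᗮ =
      LinearMap.ker ((1 - T ∘L T : K →L[ℂ] K) : K →ₗ[ℂ] K) := by
  have hS := finiteFrameOperator_inr_eq_one_sub hPar b hT.isSymmetric he
  refine ⟨fun g => ?_, ?_, ?_⟩
  · simpa [hS] using (finiteFrameOperator_apply (𝕜 := ℂ) (e ∘ Sum.inr) g).symm
  · rw [← hS, range_finiteFrameOperator]
    rfl
  · rw [← hS, ker_finiteFrameOperator]
    rfl

/-- Let `(e j)`, `j ∈ J₀ ⊔ J₁` with `J₁` finite, be a Parseval frame in a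
complex Hilbert space `K`, `(b j)` (`j ∈ J₀`) an orthonormal basis of `K`, and `T` a bounded
positive operator with bounded inverse such that `e j = T (b j)` for `j ∈ J₀`. Then:
(i) for every `g`, `∑_{j∈J₁} ⟨g, e_j⟩ e_j = g − T² g`, i.e. the frame operator of
`(e j)_{j∈J₁}` is `I − T²`; and (ii) `M₁ = span{e_j : j ∈ J₁}` equals the range of `I − T²`
and `M₁ᗮ` equals the kernel of `I − T²`.
(The paper's inner product `(f, g)`, linear in the first argument, is `⟪g, f⟫_ℂ`.) -/
theorem statement13
    {K : Type*} [NormedAddCommGroup K] [InnerProductSpace ℂ K] [CompleteSpace K]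
    {J₀ J₁ : Type*} [Countable J₀] [Fintype J₁]
    (e : J₀ ⊕ J₁ → K)
    (hPar : ∀ f : K, HasSum (fun j => ‖⟪e j, f⟫_ℂ‖ ^ 2) (‖f‖ ^ 2))
    (b : HilbertBasis J₀ ℂ K)
    (T Tinv : K →L[ℂ] K) (hT : T.IsPositive)
    (hTinv₁ : T ∘L Tinv = 1) (hTinv₂ : Tinv ∘L T = 1)
    (he : ∀ j : J₀, e (Sum.inl j) = T (b j)) :
    (∀ g : K, ∑ j : J₁, ⟪e (Sum.inr j), g⟫_ℂ • e (Sum.inr j) = g - T (T g)) ∧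
    Submodule.span ℂ (Set.range fun j : J₁ => e (Sum.inr j)) =
      LinearMap.range ((1 - T ∘L T : K →L[ℂ] K) : K →ₗ[ℂ] K) ∧
    (Submodule.span ℂ (Set.range fun j : J₁ => e (Sum.inr j)))ᗮ =
      LinearMap.ker ((1 - T ∘L T : K →L[ℂ] K) : K →ₗ[ℂ] K) :=
  statement13_general e hPar b T hT he
end
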